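/- Let p ≥ 1 and let g : ℕ → ℝ^p be square-summable, i.e. ∑_{t=0}^∞ |g(t)|₂² < ∞, and let k₁ > 0. Then the supremum of the set { ‖α • shift_{t₁} g‖₂ : α ∈ ℝ, |α| ≤ k₁, t₁ ∈ ℕ } equals k₁ · (∑_{t=0}^∞ |g(t)|₂²)^{1/2}. (Sensitivity of a single-input multi-output LTI system under the event-stream adjacency relation.) -/
import Mathlib


open MeasureTheory

/-- Time shift of a signal: `(shift t₀ g) t = g (t - t₀)` if `t ≥ t₀`, and `0` otherwise. -/
noncomputable def shift {E : Type*} [Zero E] (t₀ : ℕ) (g : ℕ → E) : ℕ → E :=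
  fun t => if t₀ ≤ t then g (t - t₀) else 0

/-- ℓ²-norm of a signal. -/
noncomputable def l2norm {E : Type*} [NormedAddCommGroup E] (y : ℕ → E) : ℝ :=
  Real.sqrt (∑' t, ‖y t‖ ^ 2)

lemma shift_tsum_sq {E : Type*} [NormedAddCommGroup E] (t₁ : ℕ) (g : ℕ → E) :
    (∑' t, ‖shift t₁ g t‖ ^ 2) = ∑' t, ‖g t‖ ^ 2 := by
  have hinj : Function.Injective (fun c : ℕ => c + t₁) := fun a b h => by simpa using h
  rw [← Function.Injective.tsum_eq (f := fun t => ‖shift t₁ g t‖ ^ 2) hinj]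
  · congr 1; ext c; simp [shift]
  · intro x hx
    by_cases h : t₁ ≤ x
    · exact ⟨x - t₁, by simp; omega⟩
    · exact absurd (by simp [shift, h]) hx

lemma l2norm_smul_shift {E : Type*} [NormedAddCommGroup E] [NormedSpace ℝ E]
    (α : ℝ) (t₁ : ℕ) (g : ℕ → E) :
    l2norm (fun t => α • shift t₁ g t) = |α| * Real.sqrt (∑' t, ‖g t‖ ^ 2) := by
  unfold l2norm
  have : ∀ t, ‖α • shift t₁ g t‖ ^ 2 = α ^ 2 * ‖shift t₁ g t‖ ^ 2 := by
    intro t; rw [norm_smul]; simp [mul_pow, Real.norm_eq_abs, sq_abs]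
  simp_rw [this, tsum_mul_left, shift_tsum_sq]
  rw [Real.sqrt_mul (sq_nonneg α), Real.sqrt_sq_eq_abs]

theorem simo_sensitivity (p : ℕ) (hp : 1 ≤ p)
    (g : ℕ → EuclideanSpace ℝ (Fin p))
    (hg : Summable fun t => ‖g t‖ ^ 2)
    (k₁ : ℝ) (hk₁ : 0 < k₁) :
    sSup {x : ℝ | ∃ (α : ℝ) (t₁ : ℕ), |α| ≤ k₁ ∧
        x = l2norm (fun t => α • shift t₁ g t)} =
      k₁ * Real.sqrt (∑' t, ‖g t‖ ^ 2) := by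
  apply le_antisymm
  · apply csSup_le
    · exact ⟨k₁ * Real.sqrt (∑' t, ‖g t‖ ^ 2), k₁, 0, by
        rw [abs_of_pos hk₁], by rw [l2norm_smul_shift, abs_of_pos hk₁]⟩
    · rintro x ⟨α, t₁, hα, rfl⟩
      rw [l2norm_smul_shift]
      exact mul_le_mul_of_nonneg_right hα (Real.sqrt_nonneg _)
  · apply le_csSup
    · refine ⟨k₁ * Real.sqrt (∑' t, ‖g t‖ ^ 2), ?_⟩
      rintro x ⟨α, t₁, hα, rfl⟩
      rw [l2norm_smul_shift]
      exact mul_le_mul_of_nonneg_right hα (Real.sqrt_nonneg _)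
    · exact ⟨k₁, 0, by rw [abs_of_pos hk₁], by rw [l2norm_smul_shift, abs_of_pos hk₁]⟩
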